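/- arXiv:1903.10961 — 5 statements merged into one kernel-verified Lean document; each statement's English description precedes it below -/
import Mathlib

section
/- For every n : ℕ, the orthogonal group O(n) is a strong deformation retract of the general linear group GL(n, ℝ): there exists a continuous map H : [0,1] × GL(n,ℝ) → GL(n,ℝ) such that H(0, A) = A for every A, H(1, A) is an orthogonal matrix (lies in the image of the canonical inclusion O(n) → GL(n,ℝ)) for every A, and H(t, Q) = Q for every t ∈ [0,1] whenever Q is orthogonal. In particular, the inclusion O(n) → GL(n,ℝ) is a homotopy equivalence of topological spaces. -/
/-!
Write `A = Q R`, where the columns of `Q` are the Gram–Schmidt orthonormalisation of the columns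
of `A` and `R = Qᴴ A` is upper triangular with diagonal entries the norms of the unnormalised
Gram–Schmidt vectors, which are positive. The straight line from `A` to `Q` is
`t ↦ Q ((1 - t) R + t)`, and `(1 - t) R + t` is again upper triangular with positive diagonal,
hence invertible. Gram–Schmidt depends continuously on a linearly independent family and fixes
orthonormal families, so this is a deformation retraction of `GL` onto the unitary group.
-/

open scoped unitInterval MatrixGroups

namespace InnerProductSpace

open Finset

variable {𝕜 E ι : Type*} [RCLike 𝕜] [NormedAddCommGroup E] [InnerProductSpace 𝕜 E]
  [LinearOrder ι] [LocallyFiniteOrderBot ι] [WellFoundedLT ι]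

theorem inner_gramSchmidt_self (f : ι → E) (j : ι) :
    inner 𝕜 (gramSchmidt 𝕜 f j) (f j) = (‖gramSchmidt 𝕜 f j‖ : 𝕜) ^ 2 := by
  conv_lhs => rw [gramSchmidt_def'' 𝕜 f j]
  rw [inner_add_right, inner_self_eq_norm_sq_to_K, inner_sum, add_eq_left]
  refine sum_eq_zero fun i hi => ?_
  rw [inner_smul_right, gramSchmidt_orthogonal 𝕜 f (mem_Iio.1 hi).ne', mul_zero]

theorem inner_gramSchmidtNormed_self (f : ι → E) (j : ι) :
    inner 𝕜 (gramSchmidtNormed 𝕜 f j) (f j) = (‖gramSchmidt 𝕜 f j‖ : 𝕜) := by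
  rw [gramSchmidtNormed, inner_smul_left, inner_gramSchmidt_self, map_inv₀, RCLike.conj_ofReal]
  by_cases h : ‖gramSchmidt 𝕜 f j‖ = 0
  · simp [h]
  · field_simp

theorem _root_.Continuous.gramSchmidt {X : Type*} [TopologicalSpace X] {f : X → ι → E}
    (hf : ∀ i, Continuous fun x => f x i) (hli : ∀ x, LinearIndependent 𝕜 (f x)) (j : ι) :
    Continuous fun x => gramSchmidt 𝕜 (f x) j := by
  induction j using WellFoundedLT.induction with
  | _ j ih =>
    have hsub (x : X) := eq_sub_of_add_eq (gramSchmidt_def'' 𝕜 (f x) j).symm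
    simp_rw [hsub]
    refine (hf j).sub (continuous_finsetSum _ fun i hi => ?_)
    have hi := ih i (mem_Iio.1 hi)
    refine ((hi.inner (hf j)).div ((RCLike.continuous_ofReal.comp hi.norm).pow 2)
      fun x => ?_).smul hi
    simpa using gramSchmidt_ne_zero i (hli x)

theorem _root_.Continuous.gramSchmidtNormed {X : Type*} [TopologicalSpace X] {f : X → ι → E}
    (hf : ∀ i, Continuous fun x => f x i) (hli : ∀ x, LinearIndependent 𝕜 (f x)) (j : ι) :
    Continuous fun x => gramSchmidtNormed 𝕜 (f x) j := by
  have hj := Continuous.gramSchmidt hf hli j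
  refine ((RCLike.continuous_ofReal.comp hj.norm).inv₀ fun x => ?_).smul hj
  simpa using gramSchmidt_ne_zero j (hli x)

end InnerProductSpace

namespace Matrix

open InnerProductSpace

theorem GeneralLinearGroup.isEmbedding_val {m K : Type*} [Fintype m] [DecidableEq m] [Field K]
    [TopologicalSpace K] [IsTopologicalRing K] [ContinuousInv₀ K] :
    Topology.IsEmbedding (Units.val : GL m K → Matrix m m K) :=
  Units.isEmbedding_val_mk' (f := Inv.inv)
    (fun A hA => (continuousAt_matrix_inv A (by
      simpa [Ring.inverse_eq_inv'] using
        continuousAt_inv₀ ((isUnit_iff_isUnit_det A).1 hA).ne_zero)).continuousWithinAt)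
    fun A => (coe_units_inv A).symm

variable {𝕜 m n : Type*} [RCLike 𝕜]

def euclideanCols (A : Matrix m n 𝕜) (j : n) : EuclideanSpace 𝕜 m :=
  WithLp.toLp 2 (Aᵀ j)

theorem continuous_euclideanCols (j : n) :
    Continuous fun A : Matrix m n 𝕜 => A.euclideanCols j :=
  (PiLp.continuous_toLp 2 _).comp (continuous_pi fun i => continuous_apply_apply i j)

variable [Fintype m]

theorem conjTranspose_mul_apply_eq_inner (A B : Matrix m n 𝕜) (i j : n) :
    (Aᴴ * B) i j = inner 𝕜 (A.euclideanCols i) (B.euclideanCols j) := by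
  simp [euclideanCols, EuclideanSpace.inner_toLp_toLp, mul_apply, dotProduct, mul_comm]

theorem gram_euclideanCols (A : Matrix m n 𝕜) : gram 𝕜 A.euclideanCols = Aᴴ * A := by
  ext i j
  rw [gram_apply, conjTranspose_mul_apply_eq_inner]

theorem orthonormal_euclideanCols_iff [DecidableEq m] {A : Matrix m m 𝕜} :
    Orthonormal 𝕜 A.euclideanCols ↔ A ∈ unitaryGroup m 𝕜 := by
  rw [← gram_eq_one_iff_orthonormal, gram_euclideanCols, mem_unitaryGroup_iff',
    star_eq_conjTranspose]

theorem linearIndependent_euclideanCols [DecidableEq m] {A : Matrix m m 𝕜} (hA : IsUnit A) :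
    LinearIndependent 𝕜 A.euclideanCols :=
  (linearIndependent_cols_iff_isUnit.2 hA).map'
    (WithLp.linearEquiv 2 𝕜 (m → 𝕜)).symm.toLinearMap (LinearEquiv.ker _)

section GramSchmidt

variable {ι : Type*} [Fintype ι] [LinearOrder ι] [LocallyFiniteOrderBot ι]

noncomputable def unitaryFactor (A : Matrix ι ι 𝕜) : Matrix ι ι 𝕜 :=
  of fun i j => gramSchmidtNormed 𝕜 A.euclideanCols j i

noncomputable def triangularFactor (A : Matrix ι ι 𝕜) : Matrix ι ι 𝕜 :=
  (unitaryFactor A)ᴴ * A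

theorem euclideanCols_unitaryFactor (A : Matrix ι ι 𝕜) :
    (unitaryFactor A).euclideanCols = gramSchmidtNormed 𝕜 A.euclideanCols :=
  rfl

theorem unitaryFactor_mem_unitaryGroup {A : Matrix ι ι 𝕜} (hA : IsUnit A) :
    unitaryFactor A ∈ unitaryGroup ι 𝕜 := by
  rw [← orthonormal_euclideanCols_iff, euclideanCols_unitaryFactor]
  exact gramSchmidtNormed_orthonormal (linearIndependent_euclideanCols hA)

theorem unitaryFactor_of_mem_unitaryGroup {A : Matrix ι ι 𝕜} (hA : A ∈ unitaryGroup ι 𝕜) :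
    unitaryFactor A = A := by
  have hON := orthonormal_euclideanCols_iff.2 hA
  have hGS : gramSchmidt 𝕜 A.euclideanCols = A.euclideanCols :=
    gramSchmidt_of_orthogonal 𝕜 hON.2
  have hGSN : gramSchmidtNormed 𝕜 A.euclideanCols = A.euclideanCols := by
    funext j
    rw [gramSchmidtNormed, hGS, hON.1 j, RCLike.ofReal_one, inv_one, one_smul]
  ext i j
  exact congrArg (· i) (congrFun hGSN j)

theorem unitaryFactor_mul_triangularFactor {A : Matrix ι ι 𝕜} (hA : IsUnit A) :
    unitaryFactor A * triangularFactor A = A := by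
  rw [triangularFactor, ← Matrix.mul_assoc, ← star_eq_conjTranspose,
    mem_unitaryGroup_iff.1 (unitaryFactor_mem_unitaryGroup hA), Matrix.one_mul]

theorem triangularFactor_isUpperTriangular (A : Matrix ι ι 𝕜) :
    (triangularFactor A).IsUpperTriangular := by
  intro i j hji
  rw [triangularFactor, conjTranspose_mul_apply_eq_inner, euclideanCols_unitaryFactor,
    gramSchmidtNormed, inner_smul_left, gramSchmidt_inv_triangular 𝕜 _ (id hji : j < i),
    mul_zero]

theorem triangularFactor_apply_self (A : Matrix ι ι 𝕜) (j : ι) :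
    triangularFactor A j j = ‖gramSchmidt 𝕜 A.euclideanCols j‖ := by
  rw [triangularFactor, conjTranspose_mul_apply_eq_inner, euclideanCols_unitaryFactor,
    inner_gramSchmidtNormed_self]

theorem isUnit_lineMap_unitaryFactor {A : Matrix ι ι 𝕜} (hA : IsUnit A) {t : ℝ} (ht : t ∈ I) :
    IsUnit (AffineMap.lineMap A (unitaryFactor A) t) := by
  set R := triangularFactor A
  have hfactor : AffineMap.lineMap A (unitaryFactor A) t
      = unitaryFactor A * AffineMap.lineMap R 1 t := by
    simp only [AffineMap.lineMap_apply_module, Matrix.mul_add, Matrix.mul_smul, Matrix.mul_one,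
      R, unitaryFactor_mul_triangularFactor hA]
  have hT : (AffineMap.lineMap R 1 t : Matrix ι ι 𝕜).IsUpperTriangular := by
    intro i j hji
    have hR : R i j = 0 := triangularFactor_isUpperTriangular A hji
    simp [AffineMap.lineMap_apply_module, hR, one_apply_ne (id hji : j < i).ne']
  have hdiag (j : ι) : (AffineMap.lineMap R 1 t : Matrix ι ι 𝕜) j j
      = (((1 - t) * ‖gramSchmidt 𝕜 A.euclideanCols j‖ + t : ℝ) : 𝕜) := by
    simp [AffineMap.lineMap_apply_module, R, triangularFactor_apply_self,
      RCLike.real_smul_eq_coe_mul]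
  have hpos (j : ι) : 0 < (1 - t) * ‖gramSchmidt 𝕜 A.euclideanCols j‖ + t := by
    have hne : gramSchmidt 𝕜 A.euclideanCols j ≠ 0 :=
      gramSchmidt_ne_zero j (linearIndependent_euclideanCols hA)
    rcases ht.1.eq_or_lt with rfl | ht0
    · simpa using hne
    · nlinarith [mul_nonneg (sub_nonneg.2 ht.2) (norm_nonneg (gramSchmidt 𝕜 A.euclideanCols j))]
  rw [hfactor]
  refine (Unitary.isUnit_coe (U := ⟨_, unitaryFactor_mem_unitaryGroup hA⟩)).mul ?_
  rw [isUnit_iff_isUnit_det, det_of_isUpperTriangular hT, isUnit_iff_ne_zero,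
    Finset.prod_ne_zero_iff]
  intro j _
  rw [hdiag, RCLike.ofReal_ne_zero]
  exact (hpos j).ne'

theorem _root_.Continuous.unitaryFactor {X : Type*} [TopologicalSpace X]
    {f : X → Matrix ι ι 𝕜} (hf : Continuous f) (hu : ∀ x, IsUnit (f x)) :
    Continuous fun x => unitaryFactor (f x) :=
  continuous_matrix fun i j => (continuous_apply i).comp <| (PiLp.continuous_ofLp 2 _).comp <|
    Continuous.gramSchmidtNormed (fun j => (continuous_euclideanCols j).comp hf)
      (fun x => linearIndependent_euclideanCols (hu x)) j

noncomputable def gramSchmidtHomotopy (p : I × GL ι 𝕜) : GL ι 𝕜 :=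
  (isUnit_lineMap_unitaryFactor p.2.isUnit p.1.2).unit

theorem coe_gramSchmidtHomotopy (p : I × GL ι 𝕜) :
    (gramSchmidtHomotopy p : Matrix ι ι 𝕜) =
      AffineMap.lineMap (p.2 : Matrix ι ι 𝕜) (unitaryFactor (p.2 : Matrix ι ι 𝕜)) (p.1 : ℝ) :=
  IsUnit.unit_spec _

theorem continuous_gramSchmidtHomotopy :
    Continuous (gramSchmidtHomotopy : I × GL ι 𝕜 → GL ι 𝕜) := by
  rw [GeneralLinearGroup.isEmbedding_val.continuous_iff]
  have hA : Continuous fun p : I × GL ι 𝕜 => (p.2 : Matrix ι ι 𝕜) :=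
    Units.continuous_val.comp continuous_snd
  simpa only [Function.comp_def, coe_gramSchmidtHomotopy] using
    hA.lineMap (hA.unitaryFactor fun p => p.2.isUnit) (continuous_subtype_val.comp continuous_fst)

end GramSchmidt

end Matrix

open Matrix in
/-- Gram–Schmidt: there is a continuous map `H : [0,1] × GL(n,ℝ) → GL(n,ℝ)` with
`H(0, A) = A` for all `A`, `H(1, A)` an orthogonal matrix for all `A`, and
`H(t, Q) = Q` for all `t` whenever `Q` is orthogonal. -/
theorem orthogonal_strong_deformation_retract_of_GL (n : ℕ) :
    ∃ H : I × GL (Fin n) ℝ → GL (Fin n) ℝ,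
      Continuous H ∧
      (∀ A : GL (Fin n) ℝ, H (0, A) = A) ∧
      (∀ A : GL (Fin n) ℝ,
        ((H (1, A) : GL (Fin n) ℝ) : Matrix (Fin n) (Fin n) ℝ) ∈
          Matrix.orthogonalGroup (Fin n) ℝ) ∧
      (∀ (t : I) (Q : GL (Fin n) ℝ),
        ((Q : GL (Fin n) ℝ) : Matrix (Fin n) (Fin n) ℝ) ∈ Matrix.orthogonalGroup (Fin n) ℝ →
          H (t, Q) = Q) := by
  refine ⟨gramSchmidtHomotopy, continuous_gramSchmidtHomotopy, fun A => ?_, fun A => ?_,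
    fun t Q hQ => ?_⟩
  · ext : 1
    rw [coe_gramSchmidtHomotopy, Set.Icc.coe_zero, AffineMap.lineMap_apply_zero]
  · rw [coe_gramSchmidtHomotopy, Set.Icc.coe_one, AffineMap.lineMap_apply_one]
    exact unitaryFactor_mem_unitaryGroup A.isUnit
  · ext : 1
    rw [coe_gramSchmidtHomotopy, unitaryFactor_of_mem_unitaryGroup hQ,
      AffineMap.lineMap_same_apply]
end

section
/- Fix n : ℕ and write E = EuclideanSpace ℝ (Fin n). Let f : E → E be continuously differentiable (ContDiff ℝ 1 f) with f 0 = 0. Define H : ℝ × E → E by H(t, x) = t⁻¹ • f (t • x) for t ≠ 0 and H(0, x) = (fderiv ℝ f 0) x. Then H is continuous (jointly in (t, x)); in particular, as t → 0, the rescalings x ↦ t⁻¹ • f(t • x) converge to the derivative fderiv ℝ f 0 uniformly on compact subsets of E. -/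
/-!
Writing `f (t • x) = ∫₀¹ Df(s t x) (t x) ds` (fundamental theorem of calculus along the segment
from `0` to `t • x`, using `f 0 = 0`) gives `t⁻¹ • f (t • x) = ∫₀¹ Df(s t x) x ds` for `t ≠ 0`. The
right-hand side is also defined at `t = 0`, where it equals `Df(0) x`, and it depends continuously
on `(t, x)` because the integrand is jointly continuous in `(s, t, x)`.
-/

open intervalIntegral

section

variable {E F : Type*} [NormedAddCommGroup E] [NormedSpace ℝ E]
  [NormedAddCommGroup F] [NormedSpace ℝ F] {f : E → F}

theorem integral_fderiv_smul_apply_eq_sub [CompleteSpace F] (hf : ContDiff ℝ 1 f) (y : E) :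
    ∫ s in (0 : ℝ)..1, fderiv ℝ f (s • y) y = f y - f 0 := by
  have hderiv : ∀ s : ℝ, HasDerivAt (fun s : ℝ => f (s • y)) (fderiv ℝ f (s • y) y) s := by
    intro s
    have hline : HasDerivAt (fun s : ℝ => s • y) y s := by
      simpa using (hasDerivAt_id s).smul_const y
    exact ((hf.differentiable one_ne_zero _).hasFDerivAt).comp_hasDerivAt s hline
  have hint : Continuous fun s : ℝ => fderiv ℝ f (s • y) y :=
    ((hf.continuous_fderiv one_ne_zero).comp (by fun_prop)).clm_apply continuous_const
  simpa using integral_eq_sub_of_hasDerivAt (fun s _ => hderiv s) (hint.intervalIntegrable 0 1)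

theorem inv_smul_apply_smul_eq_integral_fderiv [CompleteSpace F] (hf : ContDiff ℝ 1 f)
    (hf0 : f 0 = 0) {t : ℝ} (ht : t ≠ 0) (x : E) :
    t⁻¹ • f (t • x) = ∫ s in (0 : ℝ)..1, fderiv ℝ f (s • t • x) x := by
  calc t⁻¹ • f (t • x)
      = t⁻¹ • ∫ s in (0 : ℝ)..1, fderiv ℝ f (s • t • x) (t • x) := by
        rw [integral_fderiv_smul_apply_eq_sub hf, hf0, sub_zero]
    _ = ∫ s in (0 : ℝ)..1, fderiv ℝ f (s • t • x) x := by
        simp only [map_smul, integral_smul, smul_smul, inv_mul_cancel₀ ht, one_smul]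

theorem continuous_integral_fderiv_smul_smul_apply (hf : ContDiff ℝ 1 f) :
    Continuous fun p : ℝ × E => ∫ s in (0 : ℝ)..1, fderiv ℝ f (s • p.1 • p.2) p.2 := by
  apply continuous_parametric_intervalIntegral_of_continuous'
  exact ((hf.continuous_fderiv one_ne_zero).comp (by fun_prop)).clm_apply (by fun_prop)

end

theorem continuous_rescaling_to_derivative (n : ℕ)
    (f : EuclideanSpace ℝ (Fin n) → EuclideanSpace ℝ (Fin n))
    (hf : ContDiff ℝ 1 f) (hf0 : f 0 = 0)
    (H : ℝ × EuclideanSpace ℝ (Fin n) → EuclideanSpace ℝ (Fin n))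
    (hH0 : ∀ x, H (0, x) = (fderiv ℝ f 0) x)
    (hHt : ∀ t : ℝ, t ≠ 0 → ∀ x, H (t, x) = t⁻¹ • f (t • x)) :
    Continuous H := by
  have hH : H = fun p => ∫ s in (0 : ℝ)..1, fderiv ℝ f (s • p.1 • p.2) p.2 := by
    funext ⟨t, x⟩
    rcases eq_or_ne t 0 with rfl | ht
    · simp [hH0]
    · rw [hHt t ht, inv_smul_apply_smul_eq_integral_fderiv hf hf0 ht]
  rw [hH]
  exact continuous_integral_fderiv_smul_smul_apply hf
end

section
/- Let X be a topological space, let μ : X × X → X be a continuous map, and let e ∈ X be a strict two-sided unit for μ (μ(e, x) = x = μ(x, e) for every x ∈ X). Suppose μ is idempotent: μ(x, x) = x for every x ∈ X. Then for every n ≥ 1, the homotopy group πₙ(X, e) is trivial (a subsingleton): every based map (Sⁿ, ∗) → (X, e) is based-nullhomotopic. -/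
/-!  STATEMENT 4: If a topological space `X` carries a continuous multiplication
`μ : X × X → X` with a strict two-sided unit `e` which is idempotent, then all the
homotopy groups `πₙ(X, e)`, `n ≥ 1`, are trivial. -/

open scoped Topology Topology.Homotopy unitInterval
open GenLoop

section Aux

variable {X : Type*} [TopologicalSpace X] {N : Type*} (μ : X × X → X) (e : X)
  (hμ : Continuous μ) (hunit_left : ∀ x : X, μ (e, x) = x)

/-- pointwise H-space multiplication of generalized loops -/
def hsMul (f g : Ω^ N X e) : Ω^ N X e :=
  ⟨⟨fun t => μ (f t, g t), hμ.comp ((map_continuous f.1).prodMk (map_continuous g.1))⟩,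
    fun y hy => by
      simp only [ContinuousMap.coe_mk]
      rw [GenLoop.boundary f y hy, GenLoop.boundary g y hy, hunit_left]⟩

theorem hsMul_homotopic {f f' g g' : Ω^ N X e}
    (h₁ : GenLoop.Homotopic f f') (h₂ : GenLoop.Homotopic g g') :
    GenLoop.Homotopic (hsMul μ e hμ hunit_left f g) (hsMul μ e hμ hunit_left f' g') := by
  obtain ⟨H₁⟩ := h₁
  obtain ⟨H₂⟩ := h₂
  exact ⟨{ toFun := fun p => μ (H₁ p, H₂ p)
           continuous_toFun := hμ.comp (H₁.continuous.prodMk H₂.continuous)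
           map_zero_left := fun y => by
             show μ (H₁ (0, y), H₂ (0, y)) = _
             rw [H₁.apply_zero, H₂.apply_zero]; rfl
           map_one_left := fun y => by
             show μ (H₁ (1, y), H₂ (1, y)) = _
             rw [H₁.apply_one, H₂.apply_one]; rfl
           prop' := fun t y hy => by
             show μ (H₁ (t, y), H₂ (t, y)) = _
             rw [H₁.eq_fst t hy, H₂.eq_fst t hy]; rfl }⟩

end Aux

theorem homotopyGroup_subsingleton_of_idempotent_H_space
    {X : Type*} [TopologicalSpace X] (μ : X × X → X) (e : X)
    (hμ : Continuous μ)
    (hunit_left : ∀ x : X, μ (e, x) = x)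
    (hunit_right : ∀ x : X, μ (x, e) = x)
    (hidem : ∀ x : X, μ (x, x) = x) :
    ∀ n : ℕ, 1 ≤ n → Subsingleton (HomotopyGroup (Fin n) X e) := by
  intro n hn
  have : Nonempty (Fin n) := ⟨⟨0, hn⟩⟩
  let i : Fin n := ⟨0, hn⟩
  let mk : Ω^ (Fin n) X e → HomotopyGroup (Fin n) X e := Quotient.mk _
  set m : HomotopyGroup (Fin n) X e → HomotopyGroup (Fin n) X e → HomotopyGroup (Fin n) X e :=
    Quotient.map₂ (hsMul μ e hμ hunit_left)
      (fun _ _ h₁ _ _ h₂ => hsMul_homotopic μ e hμ hunit_left h₁ h₂) with hm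
  have hmq : ∀ p q : Ω^ (Fin n) X e, m (mk p) (mk q) = mk (hsMul μ e hμ hunit_left p q) :=
    fun _ _ => rfl
  have hmulq : ∀ p q : Ω^ (Fin n) X e, mk p * mk q = mk (transAt i q p) := by
    intro p q
    exact HomotopyGroup.mul_spec (i := i)
  -- `m` is unital with unit `mk const = 1`
  have hone : (1 : HomotopyGroup (Fin n) X e) = mk GenLoop.const := rfl
  have hmunital : EckmannHilton.IsUnital m (1 : HomotopyGroup (Fin n) X e) := by
    refine EckmannHilton.IsUnital.mk { left_id := ?_, right_id := ?_ }
    · rintro ⟨a⟩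
      show m (mk GenLoop.const) (mk a) = mk a
      rw [hmq]
      refine congrArg mk ?_
      ext y; exact hunit_left _
    · rintro ⟨a⟩
      show m (mk a) (mk GenLoop.const) = mk a
      rw [hmq]
      refine congrArg mk ?_
      ext y; exact hunit_right _
  have hgunital : EckmannHilton.IsUnital
      (· * · : HomotopyGroup (Fin n) X e → _ → _) (1 : HomotopyGroup (Fin n) X e) :=
    EckmannHilton.MulOneClass.isUnital
  -- distributivity (interchange law)
  have hdistrib : ∀ a b c d : HomotopyGroup (Fin n) X e,
      m (a * b) (c * d) = m a c * m b d := by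
    rintro ⟨a⟩ ⟨b⟩ ⟨c⟩ ⟨d⟩
    show m (mk a * mk b) (mk c * mk d) = m (mk a) (mk c) * m (mk b) (mk d)
    rw [hmulq, hmulq, hmq, hmq, hmq, hmulq]
    refine congrArg mk ?_
    ext y
    show μ (transAt i b a y, transAt i d c y)
        = transAt i (hsMul μ e hμ hunit_left b d) (hsMul μ e hμ hunit_left a c) y
    simp only [transAt, GenLoop.coe_copy]
    split_ifs <;> rfl
  have hmul_eq : m = (· * · : HomotopyGroup (Fin n) X e → _ → _) :=
    EckmannHilton.mul hmunital hgunital hdistrib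
  constructor
  have key : ∀ a : HomotopyGroup (Fin n) X e, a = 1 := by
    rintro ⟨a⟩
    have hmm := congrFun (congrFun hmul_eq (mk a)) (mk a)
    have h2 : mk a * mk a = mk a := by
      rw [← hmm, hmq]
      refine congrArg mk ?_
      ext y
      exact hidem _
    have : mk a = 1 := by
      calc mk a = mk a * mk a * (mk a)⁻¹ := by group
        _ = mk a * (mk a)⁻¹ := by rw [h2]
        _ = 1 := mul_inv_cancel _
    exact this
  intro a b; rw [key a, key b]
end

section
/- Let M be a nonempty, path-connected, locally compact, second-countable Hausdorff topological space (for instance a connected topological manifold). Let Ran(M) be the set of nonempty finite subsets of M, equipped with the final topology with respect to the family of maps qₖ : (Fin k → M) → Ran(M) for k ≥ 1 (source carrying the product topology) sending a tuple to its image. For S ∈ Ran(M) a nonempty finite subset of M, let Ran(M)_S ⊆ Ran(M) be the subspace of those finite subsets T with S ⊆ T. Then Ran(M)_S is weakly contractible: it is path-connected, and for every n ≥ 1 the homotopy group πₙ(Ran(M)_S, S) is trivial (a subsingleton). -/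
/-!
Union of finite sets is a multiplication on `Ran(M)_S` that is idempotent and has `S` as a
strict two-sided unit. For a based `n`-loop `γ` with `n ≥ 1` and the constant loop `c`, the
concatenation `γ·γ` is pointwise the union `(γ·c) ∪ (c·γ)`, so the union of the homotopies
`γ·c ≃ γ` and `c·γ ≃ γ` is a homotopy `γ·γ ≃ γ ∪ γ = γ`. Hence `[γ]² = [γ]`, i.e. `[γ] = 1`.

The union is continuous on families parametrised by a locally compact space, because the final
topology of `Ran(M)` is preserved by products with locally compact spaces; this reduces it to
the continuity of concatenation of tuples. Path-connectedness comes from moving the points of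
`T ⊇ S` along paths to one point of `S`.
-/

/-- The underlying set of the Ran space: nonempty finite subsets of `M`. -/
def RanSpace (M : Type*) : Type _ := {S : Set M // S.Finite ∧ S.Nonempty}

/-- The tuple-to-image map `(Fin (k+1) → M) → Ran(M)`. -/
def ranQ (M : Type*) (k : ℕ) (f : Fin (k + 1) → M) : RanSpace M :=
  ⟨Set.range f, Set.finite_range f, Set.range_nonempty f⟩

/-- The Ran space carries the final topology with respect to the maps `ranQ M k`,
whose sources carry the product topology. -/
instance (M : Type*) [TopologicalSpace M] : TopologicalSpace (RanSpace M) :=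
  ⨆ k : ℕ, TopologicalSpace.coinduced (ranQ M k) inferInstance

/-- The subspace `Ran(M)_S` of finite subsets containing `S`. -/
def RanSpaceAt (M : Type*) (S : RanSpace M) : Set (RanSpace M) :=
  {T : RanSpace M | S.1 ⊆ T.1}

theorem Fin.range_append {α : Type*} {m n : ℕ} (u : Fin m → α) (v : Fin n → α) :
    Set.range (Fin.append u v) = Set.range u ∪ Set.range v := by
  refine Set.Subset.antisymm ?_ (Set.union_subset ?_ ?_)
  · rintro x ⟨i, rfl⟩
    cases i using Fin.addCases <;> simp
  · rintro x ⟨i, rfl⟩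
    exact ⟨Fin.castAdd n i, Fin.append_left u v i⟩
  · rintro x ⟨i, rfl⟩
    exact ⟨Fin.natAdd m i, Fin.append_right u v i⟩

namespace RanSpace

variable {M : Type*}

instance : Union (RanSpace M) :=
  ⟨fun T U => ⟨T.1 ∪ U.1, T.2.1.union U.2.1, T.2.2.inl⟩⟩

theorem union_comm (T U : RanSpace M) : T ∪ U = U ∪ T :=
  Subtype.ext (Set.union_comm _ _)

theorem ranQ_append {j k : ℕ} (f : Fin (j + 1) → M) (g : Fin (k + 1) → M) :
    ranQ M (j + 1 + k) (Fin.append f g :) = ranQ M j f ∪ ranQ M k g :=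
  Subtype.ext (Fin.range_append f g)

theorem exists_ranQ_eq (T : RanSpace M) : ∃ (k : ℕ) (f : Fin (k + 1) → M), ranQ M k f = T := by
  obtain ⟨n, f, -, hf⟩ := T.2.1.fin_param
  cases n with
  | zero => simpa [← hf] using T.2.2
  | succ k => exact ⟨k, f, Subtype.ext hf⟩

variable [TopologicalSpace M]

theorem continuous_ranQ (k : ℕ) : Continuous (ranQ M k) :=
  continuous_iSup_rng continuous_coinduced_rng

theorem continuous_of_continuous_comp_ranQ {Y : Type*} [TopologicalSpace Y] {F : RanSpace M → Y}
    (h : ∀ k, Continuous fun f : Fin (k + 1) → M => F (ranQ M k f)) : Continuous F :=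
  continuous_iSup_dom.mpr fun k => continuous_coinduced_dom.mpr (h k)

theorem continuous_uncurry_of_continuous_comp_ranQ {Y Z : Type*} [TopologicalSpace Y]
    [TopologicalSpace Z] [LocallyCompactSpace Z] {F : RanSpace M → Z → Y}
    (h : ∀ k, Continuous fun p : (Fin (k + 1) → M) × Z => F (ranQ M k p.1) p.2) :
    Continuous (Function.uncurry F) := by
  have hF : ∀ T, Continuous (F T) := fun T => by
    obtain ⟨k, f, rfl⟩ := exists_ranQ_eq T
    exact (h k).comp (continuous_const.prodMk continuous_id)
  have hcurry : Continuous fun T => (⟨F T, hF T⟩ : C(Z, Y)) :=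
    continuous_of_continuous_comp_ranQ fun k =>
      ContinuousMap.continuous_of_continuous_uncurry _ (h k)
  exact ContinuousMap.continuous_uncurry_of_continuous ⟨_, hcurry⟩

variable [LocallyCompactSpace M]

theorem continuous_union_ranQ (k : ℕ) :
    Continuous fun p : RanSpace M × (Fin (k + 1) → M) => p.1 ∪ ranQ M k p.2 :=
  continuous_uncurry_of_continuous_comp_ranQ (F := fun T g => T ∪ ranQ M k g) fun j =>
    ((continuous_ranQ (j + 1 + k)).comp (Fin.continuous_append (j + 1) (k + 1))).congr
      fun p => ranQ_append p.1 p.2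

end RanSpace

theorem Continuous.ranSpace_union {M Z : Type*} [TopologicalSpace M] [LocallyCompactSpace M]
    [TopologicalSpace Z] [LocallyCompactSpace Z] {A B : Z → RanSpace M}
    (hA : Continuous A) (hB : Continuous B) : Continuous fun z => A z ∪ B z := by
  have h : Continuous fun p : RanSpace M × Z => p.1 ∪ B p.2 :=
    RanSpace.continuous_uncurry_of_continuous_comp_ranQ (F := fun T z => T ∪ B z) fun k =>
      ((RanSpace.continuous_union_ranQ k).comp
        ((hB.comp continuous_snd).prodMk continuous_fst)).congr fun p => RanSpace.union_comm _ _
  exact h.comp (hA.prodMk continuous_id)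

open scoped unitInterval Topology Topology.Homotopy

namespace GenLoop

variable {N X : Type*} [DecidableEq N] [TopologicalSpace X] {x : X}

theorem homotopic_transAt_const_left (i : N) (γ : Ω^ N X x) :
    Homotopic (transAt i const γ) γ := by
  have : Nonempty N := ⟨i⟩
  exact Quotient.exact <|
    HomotopyGroup.mul_spec.symm.trans (mul_one (M := HomotopyGroup N X x) ⟦γ⟧)

theorem homotopic_transAt_const_right (i : N) (γ : Ω^ N X x) :
    Homotopic (transAt i γ const) γ := by
  have : Nonempty N := ⟨i⟩
  exact Quotient.exact <|
    HomotopyGroup.mul_spec.symm.trans (one_mul (M := HomotopyGroup N X x) ⟦γ⟧)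

-- `mul` need not be continuous on `X × X`: the union on `Ran(M)_S` is only known to be
-- continuous on families parametrised by a locally compact space.
theorem homotopic_transAt_self (mul : X → X → X)
    (hmul : ∀ {A B : I × (I^N) → X}, Continuous A → Continuous B →
      Continuous fun z => mul (A z) (B z))
    (one_mul : ∀ a, mul x a = a) (mul_one : ∀ a, mul a x = a) (mul_self : ∀ a, mul a a = a)
    (i : N) (γ : Ω^ N X x) : Homotopic (transAt i γ γ) γ := by
  obtain ⟨H₁⟩ := homotopic_transAt_const_right i γ
  obtain ⟨H₂⟩ := homotopic_transAt_const_left i γ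
  have transAt_self_eq :
      ∀ y, transAt i γ γ y = mul (transAt i γ const y) (transAt i const γ y) := by
    intro y
    simp only [transAt, coe_copy]
    split_ifs
    · exact (mul_one _).symm
    · exact (one_mul _).symm
  refine ⟨{ toFun := fun z => mul (H₁ z) (H₂ z)
            continuous_toFun := hmul H₁.continuous H₂.continuous
            map_zero_left := ?_, map_one_left := ?_, prop' := ?_ }⟩
  · intro y
    simp only [H₁.apply_zero, H₂.apply_zero]
    exact (transAt_self_eq y).symm
  · intro y
    simp only [H₁.apply_one, H₂.apply_one, mul_self]
  · intro t y hy
    show mul (H₁ (t, y)) (H₂ (t, y)) = _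
    simp only [H₁.eq_fst t hy, H₂.eq_fst t hy, (transAt i γ const).2 y hy,
      (transAt i const γ).2 y hy, (transAt i γ γ).2 y hy, mul_self]

end GenLoop

theorem HomotopyGroup.subsingleton_of_idempotent_mul {N X : Type*} [DecidableEq N] [Nonempty N]
    [TopologicalSpace X] {x : X} (mul : X → X → X)
    (hmul : ∀ {A B : I × (I^N) → X}, Continuous A → Continuous B →
      Continuous fun z => mul (A z) (B z))
    (one_mul : ∀ a, mul x a = a) (mul_one : ∀ a, mul a x = a) (mul_self : ∀ a, mul a a = a) :
    Subsingleton (HomotopyGroup N X x) := by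
  have eq_one : ∀ γ : Ω^ N X x, ⟦γ⟧ = (1 : HomotopyGroup N X x) := fun γ => by
    obtain ⟨i⟩ := ‹Nonempty N›
    refine (mul_eq_left (M := HomotopyGroup N X x) (a := ⟦γ⟧)).mp ?_
    exact HomotopyGroup.mul_spec (i := i) |>.trans <| Quotient.sound <|
      GenLoop.homotopic_transAt_self mul hmul one_mul mul_one mul_self i γ
  exact ⟨fun a b => Quotient.inductionOn₂ a b fun γ δ => (eq_one γ).trans (eq_one δ).symm⟩

namespace RanSpaceAt

variable {M : Type*} {S : RanSpace M}

def base (S : RanSpace M) : RanSpaceAt M S := ⟨S, fun _ h => h⟩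

instance : Union (RanSpaceAt M S) :=
  ⟨fun T U => ⟨T.1 ∪ U.1, T.2.trans Set.subset_union_left⟩⟩

theorem base_union (T : RanSpaceAt M S) : base S ∪ T = T :=
  Subtype.ext (Subtype.ext (Set.union_eq_self_of_subset_left T.2))

theorem union_base (T : RanSpaceAt M S) : T ∪ base S = T :=
  Subtype.ext (Subtype.ext (Set.union_eq_self_of_subset_right T.2))

theorem union_self (T : RanSpaceAt M S) : T ∪ T = T :=
  Subtype.ext (Subtype.ext (Set.union_self _))

variable [TopologicalSpace M]

theorem continuous_union [LocallyCompactSpace M] {Z : Type*} [TopologicalSpace Z]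
    [LocallyCompactSpace Z] {A B : Z → RanSpaceAt M S} (hA : Continuous A) (hB : Continuous B) :
    Continuous fun z => A z ∪ B z :=
  ((continuous_subtype_val.comp hA).ranSpace_union (continuous_subtype_val.comp hB)).subtype_mk _

theorem joined_base [PathConnectedSpace M] [LocallyCompactSpace M] (T : RanSpaceAt M S) :
    Joined T (base S) := by
  obtain ⟨k, f, hf⟩ := RanSpace.exists_ranQ_eq T.1
  obtain ⟨s, hs⟩ := S.2.2
  let p : ∀ i, Path (f i) s := fun i => (PathConnectedSpace.joined (f i) s).somePath
  let U : I → RanSpace M := fun t => S ∪ ranQ M k fun i => p i t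
  have hU : Continuous U :=
    continuous_const.ranSpace_union <| (RanSpace.continuous_ranQ k).comp <|
      continuous_pi fun i => (p i).continuous
  have hU₀ : U 0 = T.1 := by
    refine Subtype.ext ?_
    change S.1 ∪ Set.range (fun i => p i 0) = T.1.1
    have hT : Set.range f = T.1.1 := congrArg Subtype.val hf
    simp only [Path.source, hT]
    exact Set.union_eq_self_of_subset_left T.2
  have hU₁ : U 1 = S := by
    refine Subtype.ext ?_
    change S.1 ∪ Set.range (fun i => p i 1) = S.1
    simp only [Path.target, Set.range_const]
    exact Set.union_eq_self_of_subset_right (Set.singleton_subset_iff.mpr hs)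
  exact ⟨⟨⟨fun t => ⟨U t, Set.subset_union_left⟩, hU.subtype_mk _⟩,
    Subtype.ext hU₀, Subtype.ext hU₁⟩⟩

end RanSpaceAt

theorem ranSpaceAt_weakly_contractible_general (M : Type*) [TopologicalSpace M]
    [PathConnectedSpace M] [LocallyCompactSpace M] (S : RanSpace M) :
    PathConnectedSpace ↥(RanSpaceAt M S) ∧
    ∀ n : ℕ, 1 ≤ n →
      Subsingleton (HomotopyGroup (Fin n) ↥(RanSpaceAt M S) ⟨S, fun _ h => h⟩) := by
  refine ⟨⟨⟨RanSpaceAt.base S⟩, fun T U => ?_⟩, fun n hn => ?_⟩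
  · exact (RanSpaceAt.joined_base T).trans (RanSpaceAt.joined_base U).symm
  · have : Nonempty (Fin n) := ⟨⟨0, hn⟩⟩
    exact HomotopyGroup.subsingleton_of_idempotent_mul (· ∪ ·) (RanSpaceAt.continuous_union · ·)
      RanSpaceAt.base_union RanSpaceAt.union_base RanSpaceAt.union_self

theorem ranSpaceAt_weakly_contractible (M : Type*) [TopologicalSpace M] [Nonempty M]
    [PathConnectedSpace M] [LocallyCompactSpace M] [SecondCountableTopology M]
    [T2Space M] (S : RanSpace M) :
    PathConnectedSpace ↥(RanSpaceAt M S) ∧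
    ∀ n : ℕ, 1 ≤ n →
      Subsingleton (HomotopyGroup (Fin n) ↥(RanSpaceAt M S) ⟨S, fun _ h => h⟩) :=
  ranSpaceAt_weakly_contractible_general M S
end

section
/- Fix n : ℕ. Let M be a Hausdorff topological space equipped with the structure of a C^∞ manifold modelled on EuclideanSpace ℝ (Fin n) (a charted space over EuclideanSpace ℝ (Fin n) satisfying IsManifold for the model 𝓡 n with smoothness ∞). Then for every finite subset s of M there exists a family of subsets (U_x)_{x ∈ s} of M such that: each U_x is open; x ∈ U_x for each x ∈ s; the sets U_x for distinct x ∈ s are pairwise disjoint; and each U_x, regarded as an open submanifold of M, is C^∞-diffeomorphic to EuclideanSpace ℝ (Fin n). -/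
/-!
Around each point, the preimage of a small ball under a chart is an open set diffeomorphic to the
model space, since the chart identifies it with the ball and `OpenPartialHomeomorph.univBall` is a
diffeomorphism of the ball onto the whole space. Any open neighbourhood can be shrunk to such a
set, so it suffices to apply this inside pairwise disjoint neighbourhoods of the points of the
finite set, which exist by Hausdorffness.
-/

open scoped Manifold

open Set Metric TopologicalSpace

section Restriction

variable {𝕜 : Type*} [NontriviallyNormedField 𝕜]
  {E : Type*} [NormedAddCommGroup E] [NormedSpace 𝕜 E] {H : Type*} [TopologicalSpace H]
  {I : ModelWithCorners 𝕜 E H} {M : Type*} [TopologicalSpace M] [ChartedSpace H M]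
  {E' : Type*} [NormedAddCommGroup E'] [NormedSpace 𝕜 E'] {H' : Type*} [TopologicalSpace H']
  {J : ModelWithCorners 𝕜 E' H'} {N : Type*} [TopologicalSpace N] [ChartedSpace H' N]
  {n : WithTop ℕ∞}

theorem contMDiff_subtypeVal_comp_iff {U : Opens N} {f : M → U} :
    ContMDiff I J n (Subtype.val ∘ f) ↔ ContMDiff I J n f :=
  forall_congr' fun x ↦ ChartedSpace.liftPropWithinAt_subtypeVal_comp_iff f univ x

def OpenPartialHomeomorph.preimageDiffeomorphOfMemMaximalAtlas [IsManifold I n M]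
    {e : OpenPartialHomeomorph M H} (he : e ∈ IsManifold.maximalAtlas I n M) (t : Opens H)
    (ht : (t : Set H) ⊆ e.target) :
    Diffeomorph I I (⟨e.source ∩ e ⁻¹' t, e.isOpen_inter_preimage t.isOpen⟩ : Opens M) t n
    where
  toFun p := ⟨e p, p.2.2⟩
  invFun y := ⟨e.symm y, e.map_target (ht y.2), by
    rw [mem_preimage, e.right_inv (ht y.2)]; exact y.2⟩
  left_inv p := Subtype.ext (e.left_inv p.2.1)
  right_inv y := Subtype.ext (e.right_inv (ht y.2))
  contMDiff_toFun := contMDiff_subtypeVal_comp_iff.1 <|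
    (contMDiffOn_of_mem_maximalAtlas he).comp_contMDiff contMDiff_subtype_val fun p ↦ p.2.1
  contMDiff_invFun := contMDiff_subtypeVal_comp_iff.1 <|
    (contMDiffOn_symm_of_mem_maximalAtlas he).comp_contMDiff contMDiff_subtype_val
      fun y ↦ ht y.2

end Restriction

section Ball

open OpenPartialHomeomorph

variable {E : Type*} [NormedAddCommGroup E] [InnerProductSpace ℝ E] {n : ℕ∞} {r : ℝ}

noncomputable def Diffeomorph.ballUniv (c : E) (hr : 0 < r) :
    Diffeomorph 𝓘(ℝ, E) 𝓘(ℝ, E) (⟨ball c r, isOpen_ball⟩ : Opens E) E n where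
  toFun p := (univBall c r).symm p
  invFun z := ⟨univBall c r z, by
    change _ ∈ ball c r
    rw [← univBall_target c hr]
    exact (univBall c r).map_source (by simp)⟩
  left_inv p := Subtype.ext <| (univBall c r).right_inv <| by
    rw [univBall_target c hr]; exact p.2
  right_inv z := (univBall c r).left_inv (by simp)
  contMDiff_toFun := contDiffOn_univBall_symm.contMDiffOn.comp_contMDiff
    contMDiff_subtype_val fun p ↦ p.2
  contMDiff_invFun := contMDiff_subtypeVal_comp_iff.1
    contDiff_univBall.contMDiff

variable {M : Type*} [TopologicalSpace M] [ChartedSpace E M] [IsManifold 𝓘(ℝ, E) n M]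

theorem exists_opens_subset_diffeomorph_model (x : M) {V : Set M} (hV : IsOpen V) (hx : x ∈ V) :
    ∃ O : Opens M, x ∈ O ∧ (O : Set M) ⊆ V ∧
      Nonempty (Diffeomorph 𝓘(ℝ, E) 𝓘(ℝ, E) O E n) := by
  set e := chartAt E x
  have hxe : x ∈ e.source := mem_chart_source E x
  have hex : e x ∈ e.target ∩ e.symm ⁻¹' V :=
    ⟨e.map_source hxe, by rwa [mem_preimage, e.left_inv hxe]⟩
  obtain ⟨r, hr, hball⟩ := Metric.isOpen_iff.1 (e.isOpen_inter_preimage_symm hV) (e x) hex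
  set t : Opens E := ⟨ball (e x) r, isOpen_ball⟩
  refine ⟨⟨e.source ∩ e ⁻¹' t, e.isOpen_inter_preimage t.isOpen⟩,
    ⟨hxe, mem_ball_self hr⟩, ?_,
    ⟨(e.preimageDiffeomorphOfMemMaximalAtlas (IsManifold.chart_mem_maximalAtlas x) t
      fun y hy ↦ (hball hy).1).trans (Diffeomorph.ballUniv (e x) hr)⟩⟩
  rintro p ⟨hp, hpr⟩
  simpa only [mem_preimage, e.left_inv hp] using (hball hpr).2

end Ball

theorem finite_subset_has_disjoint_euclidean_neighborhoods
    (n : ℕ) (M : Type*) [TopologicalSpace M] [T2Space M]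
    [ChartedSpace (EuclideanSpace ℝ (Fin n)) M]
    [IsManifold (𝓡 n) (⊤ : ℕ∞) M] (s : Finset M) :
    ∃ U : M → TopologicalSpace.Opens M,
      (∀ x ∈ s, x ∈ U x) ∧
      (∀ x ∈ s, ∀ y ∈ s, x ≠ y → Disjoint ((U x : Set M)) ((U y : Set M))) ∧
      (∀ x ∈ s,
        Nonempty (Diffeomorph (𝓡 n) (𝓡 n) (U x) (EuclideanSpace ℝ (Fin n)) (⊤ : ℕ∞))) := by
  obtain ⟨V, hV, hVd⟩ := s.finite_toSet.t2_separation
  choose O hxO hOV hO using fun x : M ↦ 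
    exists_opens_subset_diffeomorph_model (E := EuclideanSpace ℝ (Fin n)) (n := (⊤ : ℕ∞)) x
      (hV x).2 (hV x).1
  exact ⟨O, fun x _ ↦ hxO x, fun x hx y hy hxy ↦ (hVd hx hy hxy).mono (hOV x) (hOV y),
    fun x _ ↦ hO x⟩
end
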